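/- arXiv:2106.02418 — 2 statements merged into one kernel-verified Lean document; each statement's English description precedes it below -/
import Mathlib

section
/- Let ρ = 0, γ > −1, b > 0, μ ∈ ℝ, and assume the Fukasawa conditions hold (so G₁ > 0 on ℝ). Since ρ = 0 the function g₂ is even; let l₂ > 0 denote its positive zero, so its zeros are ±l₂. Define f(l) = −b·g₂(l)/(2·G₁(l)). Then: if μ ≥ 0, the supremum of f over (−∞,−l₂) ∪ (l₂,∞) equals the supremum of f over (l₂,∞); if μ < 0, it equals the supremum of f over (−∞,−l₂). -/
/-- SVI normalized total variance shape: `N(l) = γ + ρ·l + √(l²+1)`. -/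
noncomputable def Nf (γ ρ l : ℝ) : ℝ := γ + ρ * l + Real.sqrt (l ^ 2 + 1)

/-- `N'(l) = ρ + l/√(l²+1)`. -/
noncomputable def Nf' (ρ l : ℝ) : ℝ := ρ + l / Real.sqrt (l ^ 2 + 1)

/-- `N''(l) = (l²+1)^(−3/2)`. -/
noncomputable def Nf'' (l : ℝ) : ℝ := (l ^ 2 + 1) ^ (-(3 : ℝ) / 2)

/-- `h(l) = 1 − N'(l)·(l+μ)/(2N(l))`. -/
noncomputable def hf (γ ρ μ l : ℝ) : ℝ := 1 - Nf' ρ l * (l + μ) / (2 * Nf γ ρ l)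

/-- `g(l) = N'(l)/4`. -/
noncomputable def gf (ρ l : ℝ) : ℝ := Nf' ρ l / 4

/-- `g₂(l) = N''(l) − N'(l)²/(2N(l))`. -/
noncomputable def g2 (γ ρ l : ℝ) : ℝ := Nf'' l - (Nf' ρ l) ^ 2 / (2 * Nf γ ρ l)

/-- `G₁(l) = (h(l) − b·g(l))·(h(l) + b·g(l))`. -/
noncomputable def G1 (γ b ρ μ l : ℝ) : ℝ :=
  (hf γ ρ μ l - b * gf ρ l) * (hf γ ρ μ l + b * gf ρ l)

/-- Fukasawa (weak no-arbitrage) conditions: both factors of `G₁` are positive on `ℝ`. -/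
def FukasawaCond (γ b ρ μ : ℝ) : Prop :=
  ∀ l : ℝ, 0 < hf γ ρ μ l - b * gf ρ l ∧ 0 < hf γ ρ μ l + b * gf ρ l

/-- No Butterfly arbitrage (Martini–Mingone characterization): Fukasawa conditions plus
`G₁ + (b/(2σ))·g₂ ≥ 0` on `ℝ`. -/
def ArbitrageFree (γ b ρ μ σ : ℝ) : Prop :=
  FukasawaCond γ b ρ μ ∧ ∀ l : ℝ, 0 ≤ G1 γ b ρ μ l + b / (2 * σ) * g2 γ ρ l

lemma sqrt_sq1_pos (l : ℝ) : 0 < Real.sqrt (l ^ 2 + 1) :=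
  Real.sqrt_pos.2 (by positivity)

lemma one_le_sqrt_sq1 (l : ℝ) : 1 ≤ Real.sqrt (l ^ 2 + 1) := by
  calc (1:ℝ) = Real.sqrt 1 := Real.sqrt_one.symm
    _ ≤ _ := Real.sqrt_le_sqrt (by nlinarith)

lemma Nf_pos {γ : ℝ} (hγ : -1 < γ) (l : ℝ) : 0 < Nf γ 0 l := by
  have := one_le_sqrt_sq1 l
  unfold Nf; linarith

lemma Nf_even (γ l : ℝ) : Nf γ 0 (-l) = Nf γ 0 l := by
  unfold Nf; rw [neg_pow]; ring_nf

lemma Nf'_odd (l : ℝ) : Nf' 0 (-l) = -Nf' 0 l := by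
  unfold Nf'; rw [neg_pow]; ring_nf

lemma Nf''_even (l : ℝ) : Nf'' (-l) = Nf'' l := by
  unfold Nf''; rw [neg_pow]; ring_nf

lemma g2_even (γ l : ℝ) : g2 γ 0 (-l) = g2 γ 0 l := by
  unfold g2; rw [Nf''_even, Nf'_odd, Nf_even, neg_pow]; ring_nf

lemma gf_odd (l : ℝ) : gf 0 (-l) = -gf 0 l := by
  unfold gf; rw [Nf'_odd]; ring

lemma G1_pos {γ b μ : ℝ} (hFuk : FukasawaCond γ b 0 μ) (l : ℝ) : 0 < G1 γ b 0 μ l :=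
  mul_pos (hFuk l).1 (hFuk l).2

lemma hf_sub (γ μ k : ℝ) (hγ : -1 < γ) :
    hf γ 0 μ k - hf γ 0 μ (-k) = -(Nf' 0 k) * μ / Nf γ 0 k := by
  have hN := (Nf_pos hγ k).ne'
  unfold hf
  rw [Nf_even, Nf'_odd]
  field_simp
  ring

lemma G1_diff (γ b μ k : ℝ) (hγ : -1 < γ) :
    G1 γ b 0 μ k - G1 γ b 0 μ (-k)
      = (hf γ 0 μ k + hf γ 0 μ (-k)) * (-(Nf' 0 k) * μ / Nf γ 0 k) := by
  rw [← hf_sub γ μ k hγ]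
  unfold G1
  rw [gf_odd]
  ring

lemma g2_continuous (γ : ℝ) (hγ : -1 < γ) : Continuous (fun l => g2 γ 0 l) := by
  have hsq : Continuous fun l : ℝ => Real.sqrt (l ^ 2 + 1) :=
    Real.continuous_sqrt.comp (by continuity)
  unfold g2 Nf'' Nf' Nf
  apply Continuous.sub
  · exact Continuous.rpow_const (by continuity) (fun x => Or.inl (by positivity))
  · apply Continuous.div
    · apply Continuous.pow
      apply Continuous.add continuous_const
      exact Continuous.div continuous_id hsq (fun x => (sqrt_sq1_pos x).ne')
    · exact Continuous.mul continuous_const (by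
        apply Continuous.add (by continuity) hsq)
    · intro x
      have := Nf_pos hγ x
      unfold Nf at this
      positivity

lemma g2_neg_at (γ : ℝ) (hγ : -1 < γ) {L : ℝ} (hL2 : 2 ≤ L) (hLγ : |γ| + 3 ≤ L) :
    g2 γ 0 L < 0 := by
  set s := Real.sqrt (L ^ 2 + 1) with hsdef
  have hs2 : s ^ 2 = L ^ 2 + 1 := Real.sq_sqrt (by positivity)
  have hspos : 0 < s := sqrt_sq1_pos L
  have hsle : s ≤ L + 1 := by
    rw [hsdef, show L + 1 = Real.sqrt ((L+1)^2) by rw [Real.sqrt_sq (by linarith)]]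
    exact Real.sqrt_le_sqrt (by nlinarith)
  have hLs : L ≤ s := by nlinarith
  have hγa : γ ≤ |γ| := le_abs_self γ
  have hγs : 0 < γ + s := by nlinarith [abs_nonneg γ]
  have hrpow : (L ^ 2 + 1 : ℝ) ^ (-(3 : ℝ) / 2) = 1 / (s ^ 2 * s) := by
    have hpos : (0:ℝ) < L ^ 2 + 1 := by positivity
    rw [show (-(3:ℝ)/2) = -(1 + 1/2) by norm_num, Real.rpow_neg hpos.le,
      Real.rpow_add hpos, Real.rpow_one, ← Real.sqrt_eq_rpow, ← hsdef, hs2]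
    field_simp
  have key : 2 * (γ + s) < L ^ 2 * s := by nlinarith
  have e : g2 γ 0 L = 1 / (s ^ 2 * s) - (L / s) ^ 2 / (2 * (γ + s)) := by
    unfold g2 Nf'' Nf' Nf
    rw [hrpow, ← hsdef]
    ring_nf
  rw [e, sub_neg, div_pow, div_div, div_lt_div_iff₀ (by positivity) (by positivity)]
  nlinarith [hspos, hs2, key, sq_nonneg s]

lemma g2_nonpos (γ l₂ : ℝ) (hγ : -1 < γ) (hl₂ : 0 < l₂)
    (hzero : ∀ l : ℝ, g2 γ 0 l = 0 ↔ l = l₂ ∨ l = -l₂) {k : ℝ} (hk : l₂ < k) :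
    g2 γ 0 k ≤ 0 := by
  by_contra h
  push_neg at h
  set L := max k (max 2 (|γ| + 3)) with hL
  have hkL : k ≤ L := le_max_left _ _
  have hneg : g2 γ 0 L < 0 :=
    g2_neg_at γ hγ (le_trans (le_max_left _ _) (le_max_right _ _))
      (le_trans (le_max_right _ _) (le_max_right _ _))
  obtain ⟨c, hc, hc0⟩ := intermediate_value_Ioo' hkL
    ((g2_continuous γ hγ).continuousOn) ⟨hneg, h⟩
  rcases (hzero c).1 hc0 with rfl | rfl
  · linarith [hc.1]
  · linarith [hc.1]

lemma key_ineq (γ b μ l₂ : ℝ) (hγ : -1 < γ) (hb : 0 < b) (hFuk : FukasawaCond γ b 0 μ)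
    (hl₂ : 0 < l₂) (hzero : ∀ l : ℝ, g2 γ 0 l = 0 ↔ l = l₂ ∨ l = -l₂) {k : ℝ}
    (hk : l₂ < k) :
    (0 ≤ μ → -(b * g2 γ 0 (-k)) / (2 * G1 γ b 0 μ (-k))
        ≤ -(b * g2 γ 0 k) / (2 * G1 γ b 0 μ k)) ∧
    (μ ≤ 0 → -(b * g2 γ 0 k) / (2 * G1 γ b 0 μ k)
        ≤ -(b * g2 γ 0 (-k)) / (2 * G1 γ b 0 μ (-k))) := by
  have hkpos : 0 < k := lt_trans hl₂ hk
  have hg2 : g2 γ 0 k ≤ 0 := g2_nonpos γ l₂ hγ hl₂ hzero hk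
  have hc : 0 ≤ -(b * g2 γ 0 k) := by nlinarith
  have hG1k : 0 < G1 γ b 0 μ k := G1_pos hFuk k
  have hG1k' : 0 < G1 γ b 0 μ (-k) := G1_pos hFuk (-k)
  have hS : 0 < hf γ 0 μ k + hf γ 0 μ (-k) := by
    have h1 := (hFuk k).2
    have h2 := (hFuk (-k)).2
    rw [gf_odd] at h2
    linarith
  have hN' : 0 < Nf' 0 k := by
    unfold Nf'
    have := sqrt_sq1_pos k
    positivity
  have hN : 0 < Nf γ 0 k := Nf_pos hγ k
  have hdiff := G1_diff γ b μ k hγ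
  rw [g2_even]
  constructor
  · intro hμ
    have hle : G1 γ b 0 μ k ≤ G1 γ b 0 μ (-k) := by
      have h2 : -Nf' 0 k * μ / Nf γ 0 k ≤ 0 :=
        div_nonpos_of_nonpos_of_nonneg (by nlinarith) hN.le
      nlinarith
    gcongr
  · intro hμ
    have hle : G1 γ b 0 μ (-k) ≤ G1 γ b 0 μ k := by
      have h2 : 0 ≤ -Nf' 0 k * μ / Nf γ 0 k :=
        div_nonneg (by nlinarith) hN.le
      nlinarith
    gcongr

/-- for ρ = 0, the supremum of f = −b·g₂/(2G₁) over the two intervals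
outside the zeros ±l₂ of g₂ is attained on the right interval when μ ≥ 0 and on the
left interval when μ < 0. -/
theorem sup_f_location_decorrelated (γ b μ l₂ : ℝ) (hγ : -1 < γ) (hb : 0 < b)
    (hFuk : FukasawaCond γ b 0 μ) (hl₂ : 0 < l₂)
    (hzero : ∀ l : ℝ, g2 γ 0 l = 0 ↔ l = l₂ ∨ l = -l₂) :
    (0 ≤ μ →
      sSup ((fun l => -(b * g2 γ 0 l) / (2 * G1 γ b 0 μ l)) ''
          (Set.Iio (-l₂) ∪ Set.Ioi l₂))
        = sSup ((fun l => -(b * g2 γ 0 l) / (2 * G1 γ b 0 μ l)) '' Set.Ioi l₂)) ∧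
    (μ < 0 →
      sSup ((fun l => -(b * g2 γ 0 l) / (2 * G1 γ b 0 μ l)) ''
          (Set.Iio (-l₂) ∪ Set.Ioi l₂))
        = sSup ((fun l => -(b * g2 γ 0 l) / (2 * G1 γ b 0 μ l)) '' Set.Iio (-l₂))) := by
  set F : ℝ → ℝ := fun l => -(b * g2 γ 0 l) / (2 * G1 γ b 0 μ l) with hF
  constructor
  · intro hμ
    apply csSup_eq_csSup_of_forall_exists_le
    · rintro x ⟨l, hl | hl, rfl⟩
      · refine ⟨F (-l), ⟨-l, Set.mem_Ioi.2 (by have := Set.mem_Iio.1 hl; linarith), rfl⟩, ?_⟩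
        have hk : l₂ < -l := by have := Set.mem_Iio.1 hl; linarith
        have := (key_ineq γ b μ l₂ hγ hb hFuk hl₂ hzero hk).1 hμ
        simpa [hF] using this
      · exact ⟨F l, ⟨l, hl, rfl⟩, le_rfl⟩
    · rintro y ⟨l, hl, rfl⟩
      exact ⟨F l, ⟨l, Or.inr hl, rfl⟩, le_rfl⟩
  · intro hμ
    apply csSup_eq_csSup_of_forall_exists_le
    · rintro x ⟨l, hl | hl, rfl⟩
      · exact ⟨F l, ⟨l, hl, rfl⟩, le_rfl⟩
      · refine ⟨F (-l), ⟨-l, Set.mem_Iio.2 (by have := Set.mem_Ioi.1 hl; linarith), rfl⟩, ?_⟩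
        have hk : l₂ < l := Set.mem_Ioi.1 hl
        exact (key_ineq γ b μ l₂ hγ hb hFuk hl₂ hzero hk).2 hμ.le
    · rintro y ⟨l, hl, rfl⟩
      exact ⟨F l, ⟨l, Or.inl hl, rfl⟩, le_rfl⟩
end

section
/- (Computation of l₂ for SSVI.) Let ρ ∈ [0,1), γ = √(1−ρ²) and μ = −ρ/√(1−ρ²). Then the unique zero of g₂ in (0, ∞) is l₂(ρ) = 1/tan(arccos(−ρ)/3); equivalently, writing x = l/√(l²+1), the positive zeros of g₂ correspond exactly to the solutions of ρ = x·(3 − 4x²) with x ∈ (1/2, √3/2], and the relevant solution is x(ρ) = cos(arccos(−ρ)/3), the largest real root of 4x³ − 3x + ρ. -/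
/-! Write `x = l / √(l² + 1)`, so that `1 / √(l² + 1) = √(1 - x²)`, and `w = √(1 - ρ²) √(1 - x²)`.
Clearing denominators, `g₂(l) = 0` becomes `2 (1 - x²) (w + ρx + 1) = (ρ + x)²`, and modulo
`w² = (1 - ρ²)(1 - x²)` the difference of the two sides factors as
`(w + ρx + 1)(w - (2x² + ρx - 1))`; as `w + ρx + 1 > 0`, the zeros are given by
`w = 2x² + ρx - 1`. Squaring, `(2x² + ρx - 1)² - w² = (x + ρ)(4x³ - 3x + ρ)`, and on a root of the
cubic `2x² + ρx - 1 = (4x² - 1)(1 - x²)`, whose sign forces `x > 1/2`. The cubic has only one root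
above `1/2`, which is `cos (arccos (-ρ) / 3)` by the triple-angle formula; finally `l = cot θ`
gives `x = cos θ`, and `l ↦ x` is injective. -/

open Real Set

lemma Nf''_eq_inv_sqrt_pow (l : ℝ) : Nf'' l = (√(l ^ 2 + 1) ^ 3)⁻¹ := by
  rw [Nf'', neg_div, rpow_neg (by positivity), ← rpow_natCast (√(l ^ 2 + 1)) 3, sqrt_eq_rpow,
    ← rpow_mul (by positivity)]
  norm_num

lemma sqrt_one_sub_sq_div_sqrt (l : ℝ) :
    √(1 - (l / √(l ^ 2 + 1)) ^ 2) = (√(l ^ 2 + 1))⁻¹ := by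
  have hs : √(l ^ 2 + 1) ^ 2 = l ^ 2 + 1 := sq_sqrt (by positivity)
  rw [← sqrt_inv, div_pow, hs]
  congr 1
  field_simp
  ring

lemma sq_div_sqrt_sq_add_one_lt_one (l : ℝ) : (l / √(l ^ 2 + 1)) ^ 2 < 1 := by
  rw [div_pow, sq_sqrt (by positivity), div_lt_one (by positivity)]
  linarith

lemma div_sqrt_sq_add_one_injective : Function.Injective fun l : ℝ => l / √(l ^ 2 + 1) :=
  Function.LeftInverse.injective (g := fun x => x / √(1 - x ^ 2)) fun l => by
    have hs : 0 < √(l ^ 2 + 1) := by positivity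
    simp only [sqrt_one_sub_sq_div_sqrt]
    field_simp

lemma one_div_tan_div_sqrt_sq_add_one {θ : ℝ} (hθ : 0 < sin θ) :
    1 / tan θ / √((1 / tan θ) ^ 2 + 1) = cos θ := by
  have hsq : (cos θ / sin θ) ^ 2 + 1 = (sin θ)⁻¹ ^ 2 := by
    field_simp
    linarith [sin_sq_add_cos_sq θ]
  rw [tan_eq_sin_div_cos, one_div_div, hsq, sqrt_sq (by positivity)]
  field_simp

lemma two_mul_sq_mul_eq_sq_iff {ρ x u w : ℝ} (hu : u ^ 2 = 1 - x ^ 2)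
    (hw : w ^ 2 = (1 - ρ ^ 2) * u ^ 2) (hpos : 0 < w + ρ * x + 1) :
    2 * u ^ 2 * (w + ρ * x + 1) = (ρ + x) ^ 2 ↔ w = 2 * x ^ 2 + ρ * x - 1 := by
  have hfactor : 2 * u ^ 2 * (w + ρ * x + 1) - (ρ + x) ^ 2
      = (w + ρ * x + 1) * (w - (2 * x ^ 2 + ρ * x - 1)) := by
    linear_combination (2 * w + 2 * ρ * x + 1 + ρ ^ 2) * hu - hw
  rw [← sub_eq_zero, hfactor, mul_eq_zero, sub_eq_zero, or_iff_right hpos.ne']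

lemma g2_ssvi_eq_zero_iff {ρ : ℝ} (hρ : ρ ^ 2 ≤ 1) (l : ℝ) :
    g2 √(1 - ρ ^ 2) ρ l = 0 ↔
      √(1 - ρ ^ 2) * √(1 - (l / √(l ^ 2 + 1)) ^ 2)
        = 2 * (l / √(l ^ 2 + 1)) ^ 2 + ρ * (l / √(l ^ 2 + 1)) - 1 := by
  rw [sqrt_one_sub_sq_div_sqrt]
  set s := √(l ^ 2 + 1)
  set x := l / s
  set w := √(1 - ρ ^ 2) * s⁻¹
  have hs : 0 < s := by positivity
  have hx : x ^ 2 < 1 := sq_div_sqrt_sq_add_one_lt_one l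
  have hu : s⁻¹ ^ 2 = 1 - x ^ 2 := by
    rw [← sqrt_one_sub_sq_div_sqrt, sq_sqrt (by linarith)]
  have hw : w ^ 2 = (1 - ρ ^ 2) * s⁻¹ ^ 2 := by rw [mul_pow, sq_sqrt (by linarith)]
  have hpos : 0 < w + ρ * x + 1 := by
    have : 0 ≤ w := by positivity
    nlinarith [sq_nonneg (ρ * x + 1)]
  have hN : Nf √(1 - ρ ^ 2) ρ l = s * (w + ρ * x + 1) := by
    simp only [Nf, w, x]
    field_simp
    rfl
  rw [← two_mul_sq_mul_eq_sq_iff hu hw hpos, g2, Nf''_eq_inv_sqrt_pow, Nf', hN]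
  change (s ^ 3)⁻¹ - (ρ + x) ^ 2 / (2 * (s * (w + ρ * x + 1))) = 0 ↔ _
  rw [sub_eq_zero, eq_div_iff (by positivity)]
  field_simp

lemma le_sqrt_three_div_two_iff {x : ℝ} (hx : 0 ≤ x) : x ≤ √3 / 2 ↔ 4 * x ^ 2 ≤ 3 := by
  rw [le_div_iff₀ two_pos, mul_comm, le_sqrt (by positivity) (by norm_num), mul_pow]
  norm_num

lemma sqrt_mul_sqrt_one_sub_sq_eq_iff {ρ x : ℝ} (hρ0 : 0 ≤ ρ) (hρ1 : ρ < 1) (hx0 : 0 < x)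
    (hx1 : x ^ 2 < 1) :
    √(1 - ρ ^ 2) * √(1 - x ^ 2) = 2 * x ^ 2 + ρ * x - 1 ↔
      x ∈ Ioc (1 / 2) (√3 / 2) ∧ ρ = x * (3 - 4 * x ^ 2) := by
  have hdiff : (2 * x ^ 2 + ρ * x - 1) ^ 2 - (1 - ρ ^ 2) * (1 - x ^ 2)
      = (x + ρ) * (4 * x ^ 3 - 3 * x + ρ) := by ring
  have hprod : 0 ≤ (1 - ρ ^ 2) * (1 - x ^ 2) := mul_nonneg (by nlinarith) (by linarith)
  rw [← sqrt_mul (by nlinarith), sqrt_eq_cases, or_iff_left (fun h => hprod.not_gt h.1),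
    mem_Ioc, le_sqrt_three_div_two_iff hx0.le]
  constructor
  · rintro ⟨hsq, hnonneg⟩
    have hcubic : (x + ρ) * (4 * x ^ 3 - 3 * x + ρ) = 0 := by
      rw [← hdiff]; linear_combination hsq
    have hρx : ρ = x * (3 - 4 * x ^ 2) := by
      linear_combination (mul_eq_zero.mp hcubic).resolve_left (by positivity)
    subst hρx
    refine ⟨⟨?_, by nlinarith⟩, rfl⟩
    have hquarter : 1 ≤ 4 * x ^ 2 := by nlinarith
    nlinarith
  · rintro ⟨⟨hx12, -⟩, rfl⟩
    refine ⟨by linear_combination hdiff, by nlinarith⟩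

lemma le_of_eq_mul_three_sub_four_sq {ρ c y : ℝ} (hc : 1 / 2 < c)
    (hcρ : ρ = c * (3 - 4 * c ^ 2)) (hyρ : ρ = y * (3 - 4 * y ^ 2)) : y ≤ c := by
  by_contra! hcy
  have hfactor : (y - c) * (4 * y ^ 2 + 4 * y * c + 4 * c ^ 2 - 3) = 0 := by
    linear_combination hyρ - hcρ
  have hquad : 0 < 4 * y ^ 2 + 4 * y * c + 4 * c ^ 2 - 3 := by nlinarith
  linarith [mul_pos (sub_pos.mpr hcy) hquad]

lemma eq_cos_arccos_neg_div_three_mul {ρ : ℝ} (h₁ : -1 ≤ ρ) (h₂ : ρ ≤ 1) :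
    ρ = cos (arccos (-ρ) / 3) * (3 - 4 * cos (arccos (-ρ) / 3) ^ 2) := by
  have h := cos_three_mul (arccos (-ρ) / 3)
  rw [mul_div_cancel₀ _ three_ne_zero, cos_arccos (by linarith) (by linarith)] at h
  linear_combination -h

lemma arccos_neg_div_three_mem_Ico {ρ : ℝ} (hρ : ρ ∈ Ico 0 1) :
    arccos (-ρ) / 3 ∈ Ico (π / 6) (π / 3) := by
  have h₀ : arccos ρ ≤ π / 2 := arccos_le_pi_div_two.mpr hρ.1
  have h₁ : 0 < arccos ρ := arccos_pos.mpr hρ.2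
  rw [arccos_neg]
  constructor <;> linarith

lemma cos_arccos_neg_div_three_mem_Ioc {ρ : ℝ} (hρ : ρ ∈ Ico 0 1) :
    cos (arccos (-ρ) / 3) ∈ Ioc (1 / 2) (√3 / 2) := by
  obtain ⟨h₁, h₂⟩ := arccos_neg_div_three_mem_Ico hρ
  rw [← cos_pi_div_three, ← cos_pi_div_six]
  exact ⟨cos_lt_cos_of_nonneg_of_le_pi (by linarith [pi_pos]) (by linarith) h₂,
    cos_le_cos_of_nonneg_of_le_pi (by positivity) (by linarith) h₁⟩

lemma mem_Ioc_and_eq_mul_iff_eq_cos {ρ : ℝ} (hρ : ρ ∈ Ico 0 1) (x : ℝ) :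
    x ∈ Ioc (1 / 2) (√3 / 2) ∧ ρ = x * (3 - 4 * x ^ 2) ↔ x = cos (arccos (-ρ) / 3) := by
  have hc := cos_arccos_neg_div_three_mem_Ioc hρ
  have hcρ := eq_cos_arccos_neg_div_three_mul (by linarith [hρ.1]) hρ.2.le
  constructor
  · rintro ⟨hx, hxρ⟩
    exact le_antisymm (le_of_eq_mul_three_sub_four_sq hc.1 hcρ hxρ)
      (le_of_eq_mul_three_sub_four_sq hx.1 hxρ hcρ)
  · rintro rfl
    exact ⟨hc, hcρ⟩

/-- computation of the positive zero l₂ of g₂ for SSVI. -/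
theorem ssvi_l2_computation (ρ : ℝ) (hρ : ρ ∈ Set.Ico (0 : ℝ) 1) :
    (∀ l > 0, (g2 (Real.sqrt (1 - ρ ^ 2)) ρ l = 0 ↔
        l = 1 / Real.tan (Real.arccos (-ρ) / 3))) ∧
    (∀ l > 0, (g2 (Real.sqrt (1 - ρ ^ 2)) ρ l = 0 ↔
        l / Real.sqrt (l ^ 2 + 1) ∈ Set.Ioc (1 / 2 : ℝ) (Real.sqrt 3 / 2) ∧
        ρ = l / Real.sqrt (l ^ 2 + 1) * (3 - 4 * (l / Real.sqrt (l ^ 2 + 1)) ^ 2))) ∧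
    Real.cos (Real.arccos (-ρ) / 3) ∈ Set.Ioc (1 / 2 : ℝ) (Real.sqrt 3 / 2) ∧
    ρ = Real.cos (Real.arccos (-ρ) / 3) * (3 - 4 * Real.cos (Real.arccos (-ρ) / 3) ^ 2) ∧
    (∀ y : ℝ, 4 * y ^ 3 - 3 * y + ρ = 0 → y ≤ Real.cos (Real.arccos (-ρ) / 3)) := by
  have hc := cos_arccos_neg_div_three_mem_Ioc hρ
  have hcρ := eq_cos_arccos_neg_div_three_mul (by linarith [hρ.1]) hρ.2.le
  have hzero : ∀ l > 0, (g2 √(1 - ρ ^ 2) ρ l = 0 ↔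
      l / √(l ^ 2 + 1) ∈ Ioc (1 / 2) (√3 / 2) ∧
        ρ = l / √(l ^ 2 + 1) * (3 - 4 * (l / √(l ^ 2 + 1)) ^ 2)) := fun l hl =>
    (g2_ssvi_eq_zero_iff (by nlinarith [hρ.1, hρ.2]) l).trans
      (sqrt_mul_sqrt_one_sub_sq_eq_iff hρ.1 hρ.2 (by positivity) (sq_div_sqrt_sq_add_one_lt_one l))
  have hsin : 0 < sin (arccos (-ρ) / 3) := by
    obtain ⟨h₁, h₂⟩ := arccos_neg_div_three_mem_Ico hρ
    exact sin_pos_of_pos_of_lt_pi (by linarith [pi_pos]) (by linarith [pi_pos])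
  refine ⟨fun l hl => ?_, hzero, hc, hcρ, fun y hy =>
    le_of_eq_mul_three_sub_four_sq hc.1 hcρ (by linear_combination hy)⟩
  rw [hzero l hl, mem_Ioc_and_eq_mul_iff_eq_cos hρ, ← one_div_tan_div_sqrt_sq_add_one hsin]
  exact div_sqrt_sq_add_one_injective.eq_iff
end
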